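/- (Contraction of the perpendicular magnetization) For the map m⃗ ↦ m⃗' := m⃗ − 2μ[(n⃗×m⃗) sin h cos h − n⃗×(n⃗×m⃗) sin² h], the perpendicular component satisfies ‖m⃗'_⊥‖² = (1 − 4μ(1−μ) sin² h) ‖m⃗_⊥‖². In particular, if μ ∈ (0,1) and h is not an integer multiple of π, then ‖m⃗'_⊥‖ < ‖m⃗_⊥‖ whenever m⃗_⊥ ≠ 0. -/

import Mathlib

open scoped BigOperators
open Matrix

noncomputable section

/-- Euclidean norm on ℝ³. -/
def norm3 (v : Fin 3 → ℝ) : ℝ := Real.sqrt (∑ i, (v i) ^ 2)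

/-- dot product on ℝ³. -/
def dot3 (u v : Fin 3 → ℝ) : ℝ := ∑ i, u i * v i

/-- the component of `m⃗` perpendicular to the unit vector `n⃗`: `m⃗_⊥ = m⃗ − (m⃗·n⃗)n⃗`. -/
def perp (n m : Fin 3 → ℝ) : Fin 3 → ℝ := fun i => m i - dot3 m n * n i

/-- the Bloch-vector map `m⃗ ↦ m⃗' = m⃗ − 2μ[(n⃗×m⃗) sin h cos h − n⃗×(n⃗×m⃗) sin² h]`. -/
def mprime (μ h : ℝ) (n m : Fin 3 → ℝ) : Fin 3 → ℝ := fun i =>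
  m i - 2 * μ * ((crossProduct n m) i * Real.sin h * Real.cos h -
    (crossProduct n (crossProduct n m)) i * (Real.sin h) ^ 2)

/-
Since `n⃗ × m⃗ = n⃗ × m⃗_⊥` and `n⃗ × (n⃗ × m⃗) = −m⃗_⊥` for a unit vector `n⃗`, the map acts on the
perpendicular plane as `m⃗'_⊥ = (1 − 2μ sin² h) m⃗_⊥ − 2μ sin h cos h (n⃗ × m⃗_⊥)`, and `n⃗ × m⃗_⊥` is
orthogonal to `m⃗_⊥` with the same length. Hence the squared length is multiplied by
`(1 − 2μ sin² h)² + 4μ² sin² h cos² h = 1 − 4μ(1−μ) sin² h`.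
-/

section CrossProduct

variable {R : Type*} [CommRing R]

theorem cross_dot_cross_self_of_dotProduct_eq_zero {n p : Fin 3 → R} (hn : n ⬝ᵥ n = 1)
    (hnp : n ⬝ᵥ p = 0) : n ⨯₃ p ⬝ᵥ n ⨯₃ p = p ⬝ᵥ p := by
  rw [cross_dot_cross, hn, hnp, dotProduct_comm p n, hnp]
  ring

theorem dotProduct_self_smul_sub_smul_cross {n p : Fin 3 → R} (hn : n ⬝ᵥ n = 1)
    (hnp : n ⬝ᵥ p = 0) (a b : R) :
    (a • p - b • n ⨯₃ p) ⬝ᵥ (a • p - b • n ⨯₃ p) = (a ^ 2 + b ^ 2) * p ⬝ᵥ p := by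
  have horth : p ⬝ᵥ n ⨯₃ p = 0 := dot_cross_self n p
  simp only [sub_dotProduct, dotProduct_sub, smul_dotProduct, dotProduct_smul, smul_eq_mul,
    horth, dotProduct_comm (n ⨯₃ p) p, cross_dot_cross_self_of_dotProduct_eq_zero hn hnp]
  ring

end CrossProduct

theorem norm3_sq (v : Fin 3 → ℝ) : norm3 v ^ 2 = v ⬝ᵥ v := by
  rw [norm3, Real.sq_sqrt (by positivity)]
  simp only [dotProduct, sq]

theorem norm3_pos {v : Fin 3 → ℝ} (hv : v ≠ 0) : 0 < norm3 v := by
  obtain ⟨i, hi⟩ := Function.ne_iff.mp hv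
  exact Real.sqrt_pos.mpr
    (Finset.sum_pos' (fun j _ => sq_nonneg (v j)) ⟨i, Finset.mem_univ i, sq_pos_of_ne_zero hi⟩)

theorem perp_eq_sub_smul (n m : Fin 3 → ℝ) : perp n m = m - (m ⬝ᵥ n) • n := rfl

theorem perp_sub (n u v : Fin 3 → ℝ) : perp n (u - v) = perp n u - perp n v := by
  simp only [perp_eq_sub_smul, sub_dotProduct, sub_smul]
  abel

theorem perp_smul (n v : Fin 3 → ℝ) (a : ℝ) : perp n (a • v) = a • perp n v := by
  simp only [perp_eq_sub_smul, smul_dotProduct, smul_sub, smul_eq_mul, mul_smul]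

theorem perp_of_dotProduct_eq_zero {n v : Fin 3 → ℝ} (hv : v ⬝ᵥ n = 0) : perp n v = v := by
  rw [perp_eq_sub_smul, hv, zero_smul, sub_zero]

theorem perp_cross (n v : Fin 3 → ℝ) : perp n (n ⨯₃ v) = n ⨯₃ v :=
  perp_of_dotProduct_eq_zero (by rw [dotProduct_comm, dot_self_cross])

theorem cross_perp (n m : Fin 3 → ℝ) : n ⨯₃ perp n m = n ⨯₃ m := by
  rw [perp_eq_sub_smul, map_sub, map_smul, cross_self, smul_zero, sub_zero]

section Perp

variable {n : Fin 3 → ℝ}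

theorem perp_dotProduct_self (hn : n ⬝ᵥ n = 1) (m : Fin 3 → ℝ) : perp n m ⬝ᵥ n = 0 := by
  rw [perp_eq_sub_smul, sub_dotProduct, smul_dotProduct, hn, smul_eq_mul, mul_one, sub_self]

theorem perp_perp (hn : n ⬝ᵥ n = 1) (m : Fin 3 → ℝ) : perp n (perp n m) = perp n m :=
  perp_of_dotProduct_eq_zero (perp_dotProduct_self hn m)

theorem cross_cross_self (hn : n ⬝ᵥ n = 1) (m : Fin 3 → ℝ) : n ⨯₃ (n ⨯₃ m) = -perp n m := by
  rw [cross_cross_eq_smul_sub_smul', hn, one_smul, perp_eq_sub_smul, dotProduct_comm, neg_sub]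

theorem mprime_eq (hn : n ⬝ᵥ n = 1) (μ h : ℝ) (m : Fin 3 → ℝ) :
    mprime μ h n m = m - (2 * μ * Real.sin h * Real.cos h) • n ⨯₃ perp n m -
      (2 * μ * Real.sin h ^ 2) • perp n m := by
  rw [cross_perp]
  funext i
  simp only [mprime, cross_cross_self hn m, Pi.sub_apply, Pi.smul_apply, Pi.neg_apply, smul_eq_mul]
  ring

theorem perp_mprime (hn : n ⬝ᵥ n = 1) (μ h : ℝ) (m : Fin 3 → ℝ) :
    perp n (mprime μ h n m) = (1 - 2 * μ * Real.sin h ^ 2) • perp n m -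
      (2 * μ * Real.sin h * Real.cos h) • n ⨯₃ perp n m := by
  rw [mprime_eq hn, perp_sub, perp_sub, perp_smul, perp_smul, perp_perp hn, perp_cross]
  module

theorem norm3_perp_mprime_sq (hn : n ⬝ᵥ n = 1) (μ h : ℝ) (m : Fin 3 → ℝ) :
    norm3 (perp n (mprime μ h n m)) ^ 2 =
      (1 - 4 * μ * (1 - μ) * Real.sin h ^ 2) * norm3 (perp n m) ^ 2 := by
  have hnp : n ⬝ᵥ perp n m = 0 := by rw [dotProduct_comm, perp_dotProduct_self hn]
  rw [norm3_sq, norm3_sq, perp_mprime hn, dotProduct_self_smul_sub_smul_cross hn hnp]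
  congr 1
  linear_combination 4 * μ ^ 2 * Real.sin h ^ 2 * Real.sin_sq_add_cos_sq h

end Perp

theorem kac_perp_contraction_general
    (n : Fin 3 → ℝ) (hn : norm3 n = 1) (h μ : ℝ)
    (m : Fin 3 → ℝ) :
    norm3 (perp n (mprime μ h n m)) ^ 2 =
      (1 - 4 * μ * (1 - μ) * (Real.sin h) ^ 2) * norm3 (perp n m) ^ 2 ∧
    (μ ∈ Set.Ioo (0 : ℝ) 1 → (∀ k : ℤ, h ≠ k * Real.pi) → perp n m ≠ 0 →
      norm3 (perp n (mprime μ h n m)) < norm3 (perp n m)) := by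
  have hn' : n ⬝ᵥ n = 1 := by rw [← norm3_sq, hn, one_pow]
  have hsq := norm3_perp_mprime_sq hn' μ h m
  refine ⟨hsq, fun ⟨hμ₀, hμ₁⟩ hk hm => ?_⟩
  have hsin : Real.sin h ≠ 0 := Real.sin_ne_zero_iff.mpr fun k => (hk k).symm
  have hfactor : 1 - 4 * μ * (1 - μ) * Real.sin h ^ 2 < 1 := by
    have : 0 < 4 * μ * (1 - μ) * Real.sin h ^ 2 := by
      have := sub_pos.mpr hμ₁
      positivity
    linarith
  refine lt_of_pow_lt_pow_left₀ 2 (norm3_pos hm).le ?_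
  rw [hsq]
  exact mul_lt_of_lt_one_left (pow_pos (norm3_pos hm) 2) hfactor

/-- **contraction of the perpendicular magnetization.**
`‖m⃗'_⊥‖² = (1 − 4μ(1−μ) sin² h) ‖m⃗_⊥‖²`; in particular, for `μ ∈ (0,1)` and `h` not an
integer multiple of `π`, `‖m⃗'_⊥‖ < ‖m⃗_⊥‖` whenever `m⃗_⊥ ≠ 0`. -/
theorem kac_perp_contraction
    (n : Fin 3 → ℝ) (hn : norm3 n = 1) (h μ : ℝ) (hμ : μ ∈ Set.Icc (0 : ℝ) 1)
    (m : Fin 3 → ℝ) :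
    norm3 (perp n (mprime μ h n m)) ^ 2 =
      (1 - 4 * μ * (1 - μ) * (Real.sin h) ^ 2) * norm3 (perp n m) ^ 2 ∧
    (μ ∈ Set.Ioo (0 : ℝ) 1 → (∀ k : ℤ, h ≠ k * Real.pi) → perp n m ≠ 0 →
      norm3 (perp n (mprime μ h n m)) < norm3 (perp n m)) :=
  kac_perp_contraction_general n hn h μ m

end
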